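/- Let Σ₁ and Σ₂ be finite complete simplicial fans in a free abelian group N of finite rank. Then Σ₁ and Σ₂ are combinatorially equivalent (i.e., there exists a bijection ψ : G(Σ₁) → G(Σ₂) such that for every nonempty subset S ⊆ G(Σ₁) one has Cone(S) ∈ Σ₁ if and only if Cone(ψ(S)) ∈ Σ₂) if and only if PC(Σ₁) and PC(Σ₂) are isomorphic, i.e., there exists a bijection φ : G(Σ₁) → G(Σ₂) such that P ↦ φ(P) is a well-defined bijection from PC(Σ₁) onto PC(Σ₂). -/

import Mathlib

noncomputable section

open Finset

/-- The real vector space `N_ℝ` for the lattice `N = ℤ^d`. -/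
abbrev NR (d : ℕ) := Fin d → ℝ

/-- The canonical map from the lattice `N = ℤ^d` to `N_ℝ`. -/
def toNR {d : ℕ} (x : Fin d → ℤ) : NR d := fun i => (x i : ℝ)

/-- The convex cone generated by a set: all finite nonnegative real combinations. -/
def coneOf {d : ℕ} (S : Set (NR d)) : Set (NR d) :=
  { y | ∃ (n : ℕ) (c : Fin n → ℝ) (v : Fin n → NR d),
      (∀ i, 0 ≤ c i) ∧ (∀ i, v i ∈ S) ∧ y = ∑ i, c i • v i }

/-- `τ` is a face of the cone `σ`, cut out by a linear functional nonnegative on `σ`. -/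
def IsFaceOf {d : ℕ} (τ σ : Set (NR d)) : Prop :=
  ∃ u : NR d →ₗ[ℝ] ℝ, (∀ x ∈ σ, 0 ≤ u x) ∧ τ = {x ∈ σ | u x = 0}

/-- A rational polyhedral cone: generated by finitely many lattice points. -/
def IsRationalPolyhedralCone {d : ℕ} (σ : Set (NR d)) : Prop :=
  ∃ S : Finset (Fin d → ℤ), σ = coneOf (toNR '' (↑S : Set (Fin d → ℤ)))

/-- A pointed (strongly convex) cone. -/
def IsPointedCone {d : ℕ} (σ : Set (NR d)) : Prop :=
  ∀ x ∈ σ, -x ∈ σ → x = 0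

/-- A primitive lattice vector. -/
def IsPrimitive {d : ℕ} (x : Fin d → ℤ) : Prop :=
  x ≠ 0 ∧ ∀ (k : ℤ) (y : Fin d → ℤ), x = k • y → k = 1 ∨ k = -1

/-- The dimension of a cone. -/
def coneDim {d : ℕ} (σ : Set (NR d)) : ℕ :=
  Module.finrank ℝ ↥(Submodule.span ℝ σ)

/-- A (finite) fan in `N = ℤ^d`: a finite collection of rational pointed polyhedral
cones, closed under taking faces, such that the intersection of any two cones is a
face of each. -/
structure Fan (d : ℕ) where
  cones : Set (Set (NR d))
  finite : cones.Finite
  rational : ∀ σ ∈ cones, IsRationalPolyhedralCone σ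
  pointed : ∀ σ ∈ cones, IsPointedCone σ
  face_mem : ∀ σ ∈ cones, ∀ τ : Set (NR d), IsFaceOf τ σ → τ ∈ cones
  inter_face : ∀ σ ∈ cones, ∀ τ ∈ cones, IsFaceOf (σ ∩ τ) σ

namespace Fan

variable {d : ℕ}

/-- A complete fan. -/
def IsComplete (F : Fan d) : Prop := ⋃₀ F.cones = Set.univ

/-- A simplicial fan: every cone is generated by linearly independent vectors. -/
def IsSimplicial (F : Fan d) : Prop :=
  ∀ σ ∈ F.cones, ∃ S : Finset (Fin d → ℤ),
    LinearIndependent ℝ (fun v : ↥(toNR '' (↑S : Set (Fin d → ℤ))) => (v : NR d)) ∧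
    σ = coneOf (toNR '' (↑S : Set (Fin d → ℤ)))

/-- A nonsingular fan: every cone is generated by part of a `ℤ`-basis of `N`. -/
def IsNonsingular (F : Fan d) : Prop :=
  ∀ σ ∈ F.cones, ∃ (b : Module.Basis (Fin d) ℤ (Fin d → ℤ)) (t : Set (Fin d)),
    σ = coneOf (toNR '' (⇑b '' t))

/-- `G(Σ)`: the set of primitive generators of the rays of a fan. -/
def genSet (F : Fan d) : Set (Fin d → ℤ) :=
  { x | IsPrimitive x ∧ coneOf {toNR x} ∈ F.cones }

/-- `G(σ) = σ ∩ G(Σ)`. -/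
def coneGens (F : Fan d) (σ : Set (NR d)) : Set (Fin d → ℤ) :=
  { x ∈ F.genSet | toNR x ∈ σ }

/-- A primitive collection of a fan. -/
def IsPrimitiveCollection (F : Fan d) (P : Finset (Fin d → ℤ)) : Prop :=
  P.Nonempty ∧ (↑P : Set (Fin d → ℤ)) ⊆ F.genSet ∧
    coneOf (toNR '' (↑P : Set (Fin d → ℤ))) ∉ F.cones ∧
    ∀ x ∈ P, coneOf (toNR '' ((↑P : Set (Fin d → ℤ)) \ {x})) ∈ F.cones

/-- `IsPrimRel F P Y a`: `P` is a primitive collection of `F` whose primitive relation is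
`∑_{x ∈ P} x = ∑_{y ∈ Y} (a y) • y`, where `Y = G(σ(P))` and `σ(P)` is the unique cone
whose relative interior contains `∑_{x ∈ P} x`, and the coefficients `a y` are positive. -/
def IsPrimRel (F : Fan d) (P Y : Finset (Fin d → ℤ)) (a : (Fin d → ℤ) → ℤ) : Prop :=
  F.IsPrimitiveCollection P ∧
  ∃ σ ∈ F.cones, (↑Y : Set (Fin d → ℤ)) = F.coneGens σ ∧
    toNR (∑ x ∈ P, x) ∈ intrinsicInterior ℝ σ ∧
    (∀ y ∈ Y, 0 < a y) ∧ (∑ x ∈ P, x) = ∑ y ∈ Y, a y • y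

/-- A Fano fan: a finite complete nonsingular fan with `deg P > 0` for every
primitive collection `P` (so its toric variety is a nonsingular toric Fano `d`-fold). -/
def IsFanoFan (F : Fan d) : Prop :=
  F.IsComplete ∧ F.IsNonsingular ∧
    ∀ P Y a, F.IsPrimRel P Y a → ∑ y ∈ Y, a y < (P.card : ℤ)

/-- The collection of cones of the star subdivision of `F` along `(σ, x)`. -/
def starSub (F : Fan d) (σ : Set (NR d)) (x : Fin d → ℤ) : Set (Set (NR d)) :=
  { τ ∈ F.cones | ¬ IsFaceOf σ τ } ∪
  { ρ | ∃ τ ∈ F.cones, IsFaceOf σ τ ∧ ∃ xi ∈ F.coneGens σ,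
      IsFaceOf ρ (coneOf (toNR ''
        (insert x ((F.coneGens τ \ F.coneGens σ) ∪ (F.coneGens σ \ {xi}))))) }

/-- `F'` is the star subdivision of `F` along `(σ, x)`. -/
def IsStarSubdivisionOf (F' F : Fan d) (σ : Set (NR d)) (x : Fin d → ℤ) : Prop :=
  F'.cones = F.starSub σ x

/-- `F'` is an equivariant blow-up of `F`: the star subdivision along a cone `σ` (with at
least two generators) and the sum of the elements of `G(σ)`. -/
def IsBlowupOf (F' F : Fan d) : Prop :=
  ∃ σ ∈ F.cones, ∃ S : Finset (Fin d → ℤ),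
    (↑S : Set (Fin d → ℤ)) = F.coneGens σ ∧ 2 ≤ S.card ∧
    F'.IsStarSubdivisionOf F σ (∑ y ∈ S, y)

/-- One step of F-equivalence: an equivariant blow-up or blow-down between Fano fans. -/
def FStep (F G : Fan d) : Prop :=
  F.IsFanoFan ∧ G.IsFanoFan ∧ (G.IsBlowupOf F ∨ F.IsBlowupOf G)

/-- F-equivalence of Fano fans. -/
def FEquiv : Fan d → Fan d → Prop := Relation.ReflTransGen FStep

/-- A splitting fan: any two distinct primitive collections are disjoint. -/
def IsSplittingFan (F : Fan d) : Prop :=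
  F.IsComplete ∧ F.IsNonsingular ∧
    ∀ P Q, F.IsPrimitiveCollection P → F.IsPrimitiveCollection Q → P ≠ Q →
      ∀ x ∈ P, x ∉ Q

/-- Data of a wall relation: `τ` is a wall (a `(d-1)`-dimensional cone) with
`G(τ) = Z`, `z_d = zd`, `z_{d+1} = zd1` the generators of the two maximal cones
containing `τ`, and `∑_{z ∈ Z} (b z) • z + zd + zd1 = 0`.  The anticanonical degree of
the corresponding invariant curve is `∑_{z ∈ Z} b z + 2`. -/
def IsWallRel (F : Fan d) (τ : Set (NR d)) (Z : Finset (Fin d → ℤ))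
    (zd zd1 : Fin d → ℤ) (b : (Fin d → ℤ) → ℤ) : Prop :=
  τ ∈ F.cones ∧ coneDim τ = d - 1 ∧ (↑Z : Set (Fin d → ℤ)) = F.coneGens τ ∧
    zd ∈ F.genSet ∧ zd1 ∈ F.genSet ∧ zd ≠ zd1 ∧ zd ∉ Z ∧ zd1 ∉ Z ∧
    coneOf (toNR '' (insert zd (↑Z : Set (Fin d → ℤ)))) ∈ F.cones ∧
    coneOf (toNR '' (insert zd1 (↑Z : Set (Fin d → ℤ)))) ∈ F.cones ∧
    (∑ z ∈ Z, b z • z) + zd + zd1 = 0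

end Fan

/-- The fan of a product of projective spaces `P^{a 0} × ⋯ × P^{a (r-1)}`. -/
def IsProdProjFan {d r : ℕ} (F : Fan d) (a : Fin r → ℕ) : Prop :=
  ∃ e : (j : Fin r) → Fin (a j + 1) → (Fin d → ℤ),
    (∀ j, ∑ i, e j i = 0) ∧
    (∃ b : Module.Basis ((j : Fin r) × Fin (a j)) ℤ (Fin d → ℤ),
       ∀ (j : Fin r) (i : Fin (a j)), e j i.castSucc = b ⟨j, i⟩) ∧
    F.cones = { σ | ∃ s : (j : Fin r) → Finset (Fin (a j + 1)),
        (∀ j, s j ≠ Finset.univ) ∧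
        σ = coneOf (toNR '' (⋃ j, (e j) '' (↑(s j) : Set (Fin (a j + 1))))) }

/-- The fan of the projective space `P^d`. -/
def IsProjFan {d : ℕ} (F : Fan d) : Prop := IsProdProjFan F (fun _ : Fin 1 => d)

/-- The lattice points of `N_ℝ`. -/
def latticePts (d : ℕ) : Set (NR d) := Set.range (toNR (d := d))

/-- `F` is, up to a unimodular identification, the product of the fans `F₁` and `F₂`. -/
def IsProductOf {d d₁ d₂ : ℕ} (F : Fan d) (F₁ : Fan d₁) (F₂ : Fan d₂) : Prop :=
  ∃ φ : NR d ≃ₗ[ℝ] NR d₁ × NR d₂,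
    (⇑φ '' latticePts d = (latticePts d₁) ×ˢ (latticePts d₂)) ∧
    F.cones = { σ | ∃ σ₁ ∈ F₁.cones, ∃ σ₂ ∈ F₂.cones, ⇑φ '' σ = σ₁ ×ˢ σ₂ }

/-- `δ` is a nonempty proper face of the polytope `Δ`. -/
def IsProperPolytopeFace {d : ℕ} (δ Δ : Set (NR d)) : Prop :=
  δ.Nonempty ∧ δ ≠ Δ ∧ ∃ (u : NR d →ₗ[ℝ] ℝ) (c : ℝ),
    (∀ x ∈ Δ, u x ≤ c) ∧ δ = {x ∈ Δ | u x = c}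

/-- The collection of cones over the proper faces of the polytope `Conv(V)`
(together with the zero cone). -/
def polytopeFaceFan {d : ℕ} (V : Set (NR d)) : Set (Set (NR d)) :=
  insert ({0} : Set (NR d))
    { σ | ∃ δ : Set (NR d), IsProperPolytopeFace δ (convexHull ℝ V) ∧ σ = coneOf δ }

/-- The four-dimensional del Pezzo fan `V⁴` (up to unimodular equivalence). -/
def IsDelPezzoFan4 (F : Fan 4) : Prop :=
  ∃ b : Module.Basis (Fin 4) ℤ (Fin 4 → ℤ),
    F.cones = polytopeFaceFan (toNR ''
      ((Set.range ⇑b) ∪ (Set.range fun i => -b i) ∪ {(∑ i, b i), -(∑ i, b i)}))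

/-- The four-dimensional pseudo del Pezzo fan `Ṽ⁴` (up to unimodular equivalence). -/
def IsPseudoDelPezzoFan4 (F : Fan 4) : Prop :=
  ∃ b : Module.Basis (Fin 4) ℤ (Fin 4 → ℤ),
    F.cones = polytopeFaceFan (toNR ''
      ((Set.range ⇑b) ∪ (Set.range fun i => -b i) ∪ {∑ i, b i}))

/-- An equivariant blow-up of a 3-dimensional fan at an invariant point: star subdivision
along a 3-dimensional cone and the sum of its three generators. -/
def PointBlowup3 (F' F : Fan 3) : Prop :=
  ∃ σ ∈ F.cones, ∃ S : Finset (Fin 3 → ℤ),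
    (↑S : Set (Fin 3 → ℤ)) = F.coneGens σ ∧ S.card = 3 ∧
    F'.IsStarSubdivisionOf F σ (∑ y ∈ S, y)

/-- An equivariant blow-up of a 3-dimensional fan along an invariant curve: star
subdivision along a 2-dimensional cone and the sum of its two generators. -/
def CurveBlowup3 (F' F : Fan 3) : Prop :=
  ∃ σ ∈ F.cones, ∃ S : Finset (Fin 3 → ℤ),
    (↑S : Set (Fin 3 → ℤ)) = F.coneGens σ ∧ S.card = 2 ∧
    F'.IsStarSubdivisionOf F σ (∑ y ∈ S, y)

/-! In a simplicial cone every set of generators spans a face: it is cut out by the functional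
that vanishes on that set and equals `1` on the remaining, linearly independent, generators. The
primitive generators lying in a cone span its rays, which are faces, so they are positive multiples
of its generators. Hence in a simplicial fan the cone over a set of generators of a cone of the fan
is again in the fan, and a set of generators spans a cone of the fan exactly when it contains no
primitive collection. A bijection of generators therefore preserves cones if and only if it
preserves primitive collections. -/

namespace PointedCone

variable {E : Type*} [AddCommGroup E] [Module ℝ E] {s t : Set E} {u : E →ₗ[ℝ] ℝ} {x : E}

theorem hull_le_hull_of_forall_exists_smul (h : ∀ x ∈ s, ∃ y ∈ t, ∃ μ : ℝ, 0 ≤ μ ∧ x = μ • y) :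
    hull ℝ s ≤ hull ℝ t :=
  Submodule.span_le.2 fun x hx => by
    obtain ⟨y, hy, μ, hμ, rfl⟩ := h x hx
    rw [← Nonneg.mk_smul μ hμ]
    exact Submodule.smul_mem _ _ (subset_hull hy)

theorem map_nonneg_of_mem_hull (hu : ∀ v ∈ s, 0 ≤ u v) (hx : x ∈ hull ℝ s) : 0 ≤ u x := by
  induction hx using Submodule.span_induction with
  | mem v hv => exact hu v hv
  | zero => simp
  | add y z _ _ hy hz => rw [map_add]; positivity
  | smul a y _ hy => rw [Nonneg.mk_smul, map_smul, smul_eq_mul]; exact mul_nonneg a.2 hy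

theorem eq_zero_of_mem_hull_of_map_eq_zero (hu : ∀ v ∈ s, 0 < u v) (hx : x ∈ hull ℝ s)
    (hx0 : u x = 0) : x = 0 := by
  suffices 0 ≤ u x ∧ (u x = 0 → x = 0) from this.2 hx0
  clear hx0
  induction hx using Submodule.span_induction with
  | mem v hv => exact ⟨(hu v hv).le, fun h => absurd h (hu v hv).ne'⟩
  | zero => simp
  | add y z _ _ hy hz =>
    rw [map_add]
    refine ⟨add_nonneg hy.1 hz.1, fun h => ?_⟩
    rw [hy.2 (by linarith [hy.1, hz.1]), hz.2 (by linarith [hy.1, hz.1]), add_zero]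
  | smul a y _ hy =>
    rw [Nonneg.mk_smul, map_smul, smul_eq_mul]
    refine ⟨mul_nonneg a.2 hy.1, fun h => ?_⟩
    rcases mul_eq_zero.1 h with ha | hy0
    · rw [ha, zero_smul]
    · rw [hy.2 hy0, smul_zero]

theorem hull_sep_map_eq_zero (hu : ∀ v ∈ s, 0 ≤ u v) :
    {x ∈ (hull ℝ s : Set E) | u x = 0} = hull ℝ {v ∈ s | u v = 0} := by
  have hker : hull ℝ {v ∈ s | u v = 0} ≤ ofSubmodule (LinearMap.ker u) :=
    Submodule.span_le.2 fun v hv => hv.2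
  ext x
  refine ⟨fun ⟨hx, hx0⟩ => ?_, fun hx => ⟨Submodule.span_mono (fun v hv => hv.1) hx, hker hx⟩⟩
  have hs : s = {v ∈ s | u v = 0} ∪ {v ∈ s | 0 < u v} := by
    ext v
    have := hu v
    grind
  rw [SetLike.mem_coe, hs, hull, Submodule.span_union, Submodule.mem_sup] at hx
  obtain ⟨y, hy, z, hz, rfl⟩ := hx
  have hy0 : u y = 0 := hker hy
  have hz0 : z = 0 := eq_zero_of_mem_hull_of_map_eq_zero (fun v hv => hv.2) hz
    (by rwa [map_add, hy0, zero_add] at hx0)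
  rwa [hz0, add_zero]

end PointedCone

open PointedCone

variable {d : ℕ}

theorem coneOf_eq_hull (S : Set (NR d)) : coneOf S = hull ℝ S := by
  ext y
  rw [SetLike.mem_coe, Submodule.mem_span_set']
  constructor
  · rintro ⟨n, c, v, hc, hv, rfl⟩
    exact ⟨n, fun i => ⟨c i, hc i⟩, fun i => ⟨v i, hv i⟩, rfl⟩
  · rintro ⟨n, c, v, rfl⟩
    exact ⟨n, fun i => c i, fun i => v i, fun i => (c i).2, fun i => (v i).2, rfl⟩

theorem toNR_ne_zero {x : Fin d → ℤ} (hx : x ≠ 0) : toNR x ≠ 0 := by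
  simpa [toNR, funext_iff] using hx

theorem isFaceOf_coneOf_of_subset {W A : Set (NR d)} (hW : LinearIndepOn ℝ id W) (hA : A ⊆ W) :
    IsFaceOf (coneOf A) (coneOf W) := by
  classical
  set b := Module.Basis.extend hW
  set u := b.constr ℝ fun w => if (w : NR d) ∈ A then (0 : ℝ) else 1
  have huW : ∀ w ∈ W, u w = if w ∈ A then 0 else 1 := fun w hw => by
    have := b.constr_basis ℝ (fun w => if (w : NR d) ∈ A then (0 : ℝ) else 1)
      ⟨w, hW.subset_extend (Set.subset_univ _) hw⟩
    rwa [Module.Basis.extend_apply_self] at this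
  have hu : ∀ w ∈ W, 0 ≤ u w := fun w hw => by rw [huW w hw]; split_ifs <;> norm_num
  refine ⟨u, fun x hx => map_nonneg_of_mem_hull hu (by rwa [coneOf_eq_hull] at hx), ?_⟩
  rw [coneOf_eq_hull, coneOf_eq_hull, hull_sep_map_eq_zero hu]
  congr 2
  ext w
  refine ⟨fun hw => ⟨hA hw, by simp [huW w (hA hw), hw]⟩, fun ⟨hw, hw0⟩ => ?_⟩
  by_contra hwA
  simp [huW w hw, hwA] at hw0

theorem exists_pos_smul_eq_of_isFaceOf_coneOf_singleton {W : Set (NR d)} (hW : (0 : NR d) ∉ W)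
    {v : NR d} (hv : v ≠ 0) (h : IsFaceOf (coneOf {v}) (coneOf W)) :
    ∃ w ∈ W, ∃ μ : ℝ, 0 < μ ∧ v = μ • w := by
  obtain ⟨u, hu, hface⟩ := h
  have hu' : ∀ w ∈ W, 0 ≤ u w := fun w hw => hu w (coneOf_eq_hull W ▸ subset_hull hw)
  have hray : hull ℝ {v} = hull ℝ {w ∈ W | u w = 0} := SetLike.coe_injective <| by
    rw [← hull_sep_map_eq_zero hu', ← coneOf_eq_hull, ← coneOf_eq_hull, hface]
  obtain ⟨w, hwZ⟩ : {w ∈ W | u w = 0}.Nonempty := Set.nonempty_iff_ne_empty.2 fun hZ => by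
    have hv0 : v ∈ hull ℝ {w ∈ W | u w = 0} := hray ▸ subset_hull rfl
    rw [hZ, hull, Submodule.span_empty, Submodule.mem_bot] at hv0
    exact hv hv0
  obtain ⟨c, rfl⟩ := Submodule.mem_span_singleton.1 (hray ▸ subset_hull hwZ : w ∈ hull ℝ {v})
  rw [← Nonneg.coe_smul] at hwZ
  have hc : (c : ℝ) ≠ 0 := fun hc => hW (by simpa [hc] using hwZ.1)
  refine ⟨_, hwZ.1, (c : ℝ)⁻¹, inv_pos.2 (lt_of_le_of_ne c.2 hc.symm), ?_⟩
  rw [smul_smul, inv_mul_cancel₀ hc, one_smul]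

namespace Fan

variable {F : Fan d}

theorem coneOf_mem_of_subset (hs : F.IsSimplicial) {S T : Set (Fin d → ℤ)}
    (hSg : S ⊆ F.genSet) (hS : coneOf (toNR '' S) ∈ F.cones) (hT : T ⊆ S) :
    coneOf (toNR '' T) ∈ F.cones := by
  obtain ⟨S', hW, hσ⟩ := hs _ hS
  set W := toNR '' (S' : Set (Fin d → ℤ))
  have hray : ∀ x ∈ T, ∃ w ∈ W, ∃ μ : ℝ, 0 < μ ∧ toNR x = μ • w := by
    intro x hx
    have hxg := hSg (hT hx)
    refine exists_pos_smul_eq_of_isFaceOf_coneOf_singleton (fun h0 => hW.ne_zero ⟨0, h0⟩ rfl)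
      (toNR_ne_zero hxg.1.1) ?_
    have hsub : coneOf {toNR x} ⊆ coneOf (toNR '' S) := by
      rw [coneOf_eq_hull, coneOf_eq_hull]
      exact Submodule.span_mono (Set.singleton_subset_iff.2 (Set.mem_image_of_mem _ (hT hx)))
    have hface := F.inter_face _ hS _ hxg.2
    rwa [Set.inter_eq_right.2 hsub, hσ] at hface
  set A := {w ∈ W | ∃ x ∈ T, ∃ μ : ℝ, 0 < μ ∧ toNR x = μ • w}
  have hTA : coneOf (toNR '' T) = coneOf A := by
    rw [coneOf_eq_hull, coneOf_eq_hull]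
    refine congrArg _ (le_antisymm (hull_le_hull_of_forall_exists_smul ?_)
      (hull_le_hull_of_forall_exists_smul ?_))
    · rintro _ ⟨x, hx, rfl⟩
      obtain ⟨w, hw, μ, hμ, hxw⟩ := hray x hx
      exact ⟨w, ⟨hw, x, hx, μ, hμ, hxw⟩, μ, hμ.le, hxw⟩
    · rintro w ⟨-, x, hx, μ, hμ, hxw⟩
      refine ⟨toNR x, Set.mem_image_of_mem _ hx, μ⁻¹, inv_nonneg.2 hμ.le, ?_⟩
      rw [hxw, smul_smul, inv_mul_cancel₀ hμ.ne', one_smul]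
  rw [hTA]
  exact F.face_mem _ hS _ (hσ ▸ isFaceOf_coneOf_of_subset hW (Set.sep_subset _ _))

theorem one_lt_card_of_coneOf_notMem {S : Finset (Fin d → ℤ)} (hne : S.Nonempty)
    (hS : ↑S ⊆ F.genSet) (hnot : coneOf (toNR '' ↑S) ∉ F.cones) : 1 < S.card := by
  rw [Finset.one_lt_card_iff_nontrivial]
  refine hne.exists_eq_singleton_or_nontrivial.resolve_left ?_
  rintro ⟨x, rfl⟩
  exact hnot (by simpa using (hS (mem_singleton_self x)).2)

theorem IsPrimitiveCollection.one_lt_card {P : Finset (Fin d → ℤ)}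
    (hP : F.IsPrimitiveCollection P) : 1 < P.card :=
  one_lt_card_of_coneOf_notMem hP.1 hP.2.1 hP.2.2.1

theorem exists_isPrimitiveCollection_subset {S : Finset (Fin d → ℤ)} (hne : S.Nonempty)
    (hS : ↑S ⊆ F.genSet) (hnot : coneOf (toNR '' ↑S) ∉ F.cones) :
    ∃ P ⊆ S, F.IsPrimitiveCollection P := by
  induction S using Finset.strongInduction with
  | H S ih =>
  by_cases hmin : ∀ x ∈ S, coneOf (toNR '' (↑S \ {x})) ∈ F.cones
  · exact ⟨S, subset_rfl, hne, hS, hnot, hmin⟩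
  push Not at hmin
  obtain ⟨x, hx, hxS⟩ := hmin
  have hne' : (S.erase x).Nonempty :=
    (Finset.one_lt_card_iff_nontrivial.1 (one_lt_card_of_coneOf_notMem hne hS hnot)).erase_nonempty
  obtain ⟨P, hPS, hP⟩ := ih _ (erase_ssubset hx) hne'
    ((coe_subset.2 (erase_subset x S)).trans hS) (by rwa [coe_erase])
  exact ⟨P, hPS.trans (erase_subset x S), hP⟩

theorem coneOf_mem_iff_not_exists_isPrimitiveCollection (hs : F.IsSimplicial)
    {S : Finset (Fin d → ℤ)} (hne : S.Nonempty) (hS : ↑S ⊆ F.genSet) :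
    coneOf (toNR '' ↑S) ∈ F.cones ↔ ¬ ∃ P ⊆ S, F.IsPrimitiveCollection P :=
  ⟨fun h ⟨_, hPS, hP⟩ => hP.2.2.1 (coneOf_mem_of_subset hs hS h (coe_subset.2 hPS)),
    fun h => by_contra fun hnot => h (exists_isPrimitiveCollection_subset hne hS hnot)⟩

theorem isPrimitiveCollection_image_iff [DecidableEq (Fin d → ℤ)] {F₁ F₂ : Fan d}
    {ψ : (Fin d → ℤ) → (Fin d → ℤ)} (hinj : Set.InjOn ψ F₁.genSet)
    (hmaps : Set.MapsTo ψ F₁.genSet F₂.genSet)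
    (hiff : ∀ S : Finset (Fin d → ℤ), S.Nonempty → ↑S ⊆ F₁.genSet →
      (coneOf (toNR '' ↑S) ∈ F₁.cones ↔ coneOf (toNR '' (ψ '' ↑S)) ∈ F₂.cones))
    {P : Finset (Fin d → ℤ)} (hP : ↑P ⊆ F₁.genSet) :
    F₁.IsPrimitiveCollection P ↔ F₂.IsPrimitiveCollection (P.image ψ) := by
  have hcard : (P.image ψ).card = P.card := card_image_of_injOn (hinj.mono hP)
  by_cases hP1 : 1 < P.card
  swap
  · exact iff_of_false (fun h => hP1 h.one_lt_card) (fun h => hP1 (hcard ▸ h.one_lt_card))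
  have hne : P.Nonempty := card_pos.1 (by omega)
  have herase : ∀ x ∈ P, coneOf (toNR '' (↑P \ {x})) ∈ F₁.cones ↔
      coneOf (toNR '' (ψ '' ↑P \ {ψ x})) ∈ F₂.cones := by
    intro x hx
    have hne' : (P.erase x).Nonempty := (Finset.one_lt_card_iff_nontrivial.1 hP1).erase_nonempty
    have := hiff (P.erase x) hne' ((coe_subset.2 (erase_subset x P)).trans hP)
    rwa [coe_erase, (hinj.mono hP).image_sdiff_subset (Set.singleton_subset_iff.2 hx),
      Set.image_singleton] at this
  simp only [IsPrimitiveCollection, hne, hne.image ψ, hP, true_and, coe_image,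
    (Set.image_mono hP).trans hmaps.image_subset, ← hiff P hne hP, forall_mem_image]
  exact and_congr_right fun _ => forall₂_congr herase

theorem exists_isPrimitiveCollection_subset_image_iff [DecidableEq (Fin d → ℤ)] {F₁ F₂ : Fan d}
    {φ : (Fin d → ℤ) → (Fin d → ℤ)} (hinj : Set.InjOn φ F₁.genSet)
    (h₁₂ : ∀ P : Finset (Fin d → ℤ), F₁.IsPrimitiveCollection P →
      ∃ Q : Finset (Fin d → ℤ), F₂.IsPrimitiveCollection Q ∧ ↑Q = φ '' ↑P)
    (h₂₁ : ∀ Q : Finset (Fin d → ℤ), F₂.IsPrimitiveCollection Q →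
      ∃ P : Finset (Fin d → ℤ), F₁.IsPrimitiveCollection P ∧ ↑Q = φ '' ↑P)
    {S : Finset (Fin d → ℤ)} (hS : ↑S ⊆ F₁.genSet) :
    (∃ P ⊆ S, F₁.IsPrimitiveCollection P) ↔ ∃ Q ⊆ S.image φ, F₂.IsPrimitiveCollection Q := by
  constructor
  · rintro ⟨P, hPS, hP⟩
    obtain ⟨Q, hQ, hQP⟩ := h₁₂ P hP
    refine ⟨Q, ?_, hQ⟩
    rw [← coe_subset, hQP, coe_image]
    exact Set.image_mono (coe_subset.2 hPS)
  · rintro ⟨Q, hQS, hQ⟩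
    obtain ⟨P, hP, hQP⟩ := h₂₁ Q hQ
    refine ⟨P, ?_, hP⟩
    rw [← coe_subset, ← hinj.image_subset_image_iff hP.2.1 hS, ← hQP, ← coe_image, coe_subset]
    exact hQS

end Fan

theorem combinatorially_equivalent_iff_pc_isomorphic_general {d : ℕ} (F₁ F₂ : Fan d)
    (h₁s : F₁.IsSimplicial) (h₂s : F₂.IsSimplicial) :
    (∃ ψ : (Fin d → ℤ) → (Fin d → ℤ), Set.BijOn ψ F₁.genSet F₂.genSet ∧
        ∀ S : Finset (Fin d → ℤ), S.Nonempty → (↑S : Set (Fin d → ℤ)) ⊆ F₁.genSet →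
          (coneOf (toNR '' (↑S : Set (Fin d → ℤ))) ∈ F₁.cones ↔
            coneOf (toNR '' (ψ '' (↑S : Set (Fin d → ℤ)))) ∈ F₂.cones)) ↔
      (∃ φ : (Fin d → ℤ) → (Fin d → ℤ), Set.BijOn φ F₁.genSet F₂.genSet ∧
        (∀ P : Finset (Fin d → ℤ), F₁.IsPrimitiveCollection P →
          ∃ Q : Finset (Fin d → ℤ), F₂.IsPrimitiveCollection Q ∧
            (↑Q : Set (Fin d → ℤ)) = φ '' (↑P : Set (Fin d → ℤ))) ∧
        (∀ Q : Finset (Fin d → ℤ), F₂.IsPrimitiveCollection Q →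
          ∃ P : Finset (Fin d → ℤ), F₁.IsPrimitiveCollection P ∧
            (↑Q : Set (Fin d → ℤ)) = φ '' (↑P : Set (Fin d → ℤ)))) := by
  classical
  constructor
  · rintro ⟨ψ, hbij, hiff⟩
    have hpc := fun (P : Finset (Fin d → ℤ)) (hP : ↑P ⊆ F₁.genSet) =>
      Fan.isPrimitiveCollection_image_iff hbij.injOn hbij.mapsTo hiff hP
    refine ⟨ψ, hbij, fun P hP => ⟨P.image ψ, (hpc P hP.2.1).1 hP, coe_image⟩, fun Q hQ => ?_⟩
    obtain ⟨P, hP, rfl⟩ := Finset.subset_set_image_iff.1 (hQ.2.1.trans hbij.image_eq.superset)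
    exact ⟨P, (hpc P hP).2 hQ, coe_image⟩
  · rintro ⟨φ, hbij, h₁₂, h₂₁⟩
    refine ⟨φ, hbij, fun S hne hS => ?_⟩
    have hS₂ : ↑(S.image φ) ⊆ F₂.genSet := by
      rw [coe_image]
      exact (Set.image_mono hS).trans hbij.mapsTo.image_subset
    rw [← coe_image (f := φ), Fan.coneOf_mem_iff_not_exists_isPrimitiveCollection h₁s hne hS,
      Fan.coneOf_mem_iff_not_exists_isPrimitiveCollection h₂s (hne.image φ) hS₂]
    exact not_congr (Fan.exists_isPrimitiveCollection_subset_image_iff hbij.injOn h₁₂ h₂₁ hS)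

/-- Two finite complete simplicial fans are combinatorially equivalent
if and only if their sets of primitive collections are isomorphic. -/
theorem combinatorially_equivalent_iff_pc_isomorphic {d : ℕ} (F₁ F₂ : Fan d)
    (h₁c : F₁.IsComplete) (h₁s : F₁.IsSimplicial)
    (h₂c : F₂.IsComplete) (h₂s : F₂.IsSimplicial) :
    (∃ ψ : (Fin d → ℤ) → (Fin d → ℤ), Set.BijOn ψ F₁.genSet F₂.genSet ∧
        ∀ S : Finset (Fin d → ℤ), S.Nonempty → (↑S : Set (Fin d → ℤ)) ⊆ F₁.genSet →
          (coneOf (toNR '' (↑S : Set (Fin d → ℤ))) ∈ F₁.cones ↔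
            coneOf (toNR '' (ψ '' (↑S : Set (Fin d → ℤ)))) ∈ F₂.cones)) ↔
      (∃ φ : (Fin d → ℤ) → (Fin d → ℤ), Set.BijOn φ F₁.genSet F₂.genSet ∧
        (∀ P : Finset (Fin d → ℤ), F₁.IsPrimitiveCollection P →
          ∃ Q : Finset (Fin d → ℤ), F₂.IsPrimitiveCollection Q ∧
            (↑Q : Set (Fin d → ℤ)) = φ '' (↑P : Set (Fin d → ℤ))) ∧
        (∀ Q : Finset (Fin d → ℤ), F₂.IsPrimitiveCollection Q →
          ∃ P : Finset (Fin d → ℤ), F₁.IsPrimitiveCollection P ∧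
            (↑Q : Set (Fin d → ℤ)) = φ '' (↑P : Set (Fin d → ℤ)))) :=
  combinatorially_equivalent_iff_pc_isomorphic_general F₁ F₂ h₁s h₂s
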